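/- arXiv:2112.11182 — 4 statements merged into one kernel-verified Lean document; each statement's English description precedes it below -/
import Mathlib

section
/- Five-segment property: for points a,b,c,d,w,x,y,z in the plane, if a ≠ b, b lies between a and c, x lies between w and y, dist a b = dist w x, dist b c = dist x y, dist a d = dist w z, and dist b d = dist x z, then dist c d = dist y z. -/
open scoped RealInnerProductSpace

private lemma seg_rep {E : Type*} [NormedAddCommGroup E] [NormedSpace ℝ E]
    (a b c : E) (h : b ∈ segment ℝ a c) (hab : a ≠ b) :
    c = a + ((dist a c) / (dist a b)) • (b - a) := by
  obtain ⟨u, v, hu, hv, huv, hb⟩ := h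
  have hv0 : v ≠ 0 := by
    rintro rfl
    apply hab
    have : u = 1 := by linarith
    simp [this] at hb
    exact hb
  have hc : c = a + v⁻¹ • (b - a) := by
    have hu1 : u = 1 - v := by linarith
    subst hu1
    rw [← hb]
    match_scalars <;> field_simp <;> ring
  have hd : dist a c / dist a b = v⁻¹ := by
    have h1 : dist a c = ‖c - a‖ := by rw [dist_eq_norm']
    have h2 : dist a b = ‖b - a‖ := by rw [dist_eq_norm']
    rw [h1, h2, hc]
    simp only [add_sub_cancel_left, norm_smul, Real.norm_eq_abs, abs_of_pos (by positivity : (0:ℝ) < v⁻¹)]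
    have hba : ‖b - a‖ ≠ 0 := by
      simp [sub_eq_zero]
      exact fun h => hab h.symm
    field_simp
  rw [hd]; exact hc

private lemma key {E : Type*} [NormedAddCommGroup E] [InnerProductSpace ℝ E]
    (a b d : E) (s : ℝ) :
    dist (a + s • (b - a)) d ^ 2 =
      dist a d ^ 2 + s * (dist b d ^ 2 - dist a d ^ 2 - dist a b ^ 2)
        + s ^ 2 * dist a b ^ 2 := by
  have e1 : a + s • (b - a) - d = (a - d) + s • (b - a) := by abel
  have e2 : b - d = (a - d) + (b - a) := by abel
  rw [dist_eq_norm, dist_eq_norm a d, dist_eq_norm b d, dist_eq_norm a b, norm_sub_rev a b, e1]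
  rw [@norm_add_sq_real]
  rw [e2, norm_add_sq_real]
  rw [inner_smul_right, norm_smul, Real.norm_eq_abs]
  rw [mul_pow, sq_abs]
  ring

theorem five_segment (a b c d w x y z : EuclideanSpace ℝ (Fin 2))
    (hab : a ≠ b) (h1 : b ∈ segment ℝ a c) (h2 : x ∈ segment ℝ w y)
    (e1 : dist a b = dist w x) (e2 : dist b c = dist x y)
    (e3 : dist a d = dist w z) (e4 : dist b d = dist x z) :
    dist c d = dist y z := by
  have hwx : w ≠ x := by
    intro h; apply hab
    have := e1; rw [h, dist_self] at this
    exact dist_eq_zero.mp this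
  have hac : dist a b + dist b c = dist a c := dist_add_dist_of_mem_segment h1
  have hwy : dist w x + dist x y = dist w y := dist_add_dist_of_mem_segment h2
  have hc := seg_rep a b c h1 hab
  have hy := seg_rep w x y h2 hwx
  have hs : dist a c / dist a b = dist w y / dist w x := by
    rw [← hac, ← hwy, e1, e2]
  have k1 := key a b d (dist a c / dist a b)
  have k2 := key w x z (dist w y / dist w x)
  rw [← hc] at k1
  rw [← hy] at k2
  have hsq : dist c d ^ 2 = dist y z ^ 2 := by
    rw [k1, k2, hs, e1, e3, e4]
  nlinarith [dist_nonneg (x := c) (y := d), dist_nonneg (x := y) (y := z)]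
end

section
/- Strict outer Pasch: for points a,b,c,x,q in the plane, if x does not lie on line bq, q lies strictly between b and c, and x lies strictly between q and a, then there exists a point p such that x lies strictly between b and p and p lies strictly between c and a. -/
open AffineMap

theorem outer_pasch_strict (a b c x q : EuclideanSpace ℝ (Fin 2))
    (hx : ¬ Collinear ℝ {x, b, q}) (h1 : Sbtw ℝ b q c) (h2 : Sbtw ℝ q x a) :
    ∃ p : EuclideanSpace ℝ (Fin 2), Sbtw ℝ b x p ∧ Sbtw ℝ c p a := by
  obtain ⟨t, ht, hq⟩ := (Set.mem_image _ _ _).1 h1.wbtw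
  obtain ⟨s, hs, hxx⟩ := (Set.mem_image _ _ _).1 h2.wbtw
  have ht0 : t ≠ 0 := by rintro rfl; simp at hq; exact h1.ne_left hq.symm
  have ht1 : t ≠ 1 := by rintro rfl; simp at hq; exact h1.ne_right hq.symm
  have hs0 : s ≠ 0 := by rintro rfl; simp at hxx; exact h2.ne_left hxx.symm
  have hs1 : s ≠ 1 := by rintro rfl; simp at hxx; exact h2.ne_right hxx.symm
  have ht' : t ∈ Set.Ioo (0:ℝ) 1 := ⟨ht.1.lt_of_ne (Ne.symm ht0), ht.2.lt_of_ne ht1⟩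
  have hs' : s ∈ Set.Ioo (0:ℝ) 1 := ⟨hs.1.lt_of_ne (Ne.symm hs0), hs.2.lt_of_ne hs1⟩
  set r : ℝ := s + t - s * t with hr
  have hr0 : 0 < r := by nlinarith [hs'.1, ht'.1, hs'.2, ht'.2]
  have hr1 : r < 1 := by nlinarith [hs'.2, ht'.2]
  have hsr : s < r := by nlinarith [ht'.1, hs'.2]
  set u : ℝ := s / r with hu
  have hu' : u ∈ Set.Ioo (0:ℝ) 1 := ⟨div_pos hs'.1 hr0, (div_lt_one hr0).2 hsr⟩
  set p : EuclideanSpace ℝ (Fin 2) := lineMap c a u with hp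
  have key : lineMap b p r = x := by
    rw [← hxx, ← hq, hp]
    simp only [lineMap_apply, vsub_eq_sub, vadd_eq_add]
    have hd : s - s * t + t ≠ 0 := by nlinarith [hs'.1, hs'.2, ht'.1]
    match_scalars <;> first
      | linear_combination s * mul_inv_cancel₀ hd
      | linear_combination (-s) * mul_inv_cancel₀ hd
      | ring
  have hxb : x ≠ b := by
    rintro rfl
    exact hx (by simpa [Set.insert_comm] using collinear_pair ℝ x q)
  have hca : c ≠ a := by
    rintro rfl
    apply hx
    rw [collinear_iff_of_mem (Set.mem_insert_of_mem _ (Set.mem_insert _ _) :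
      b ∈ ({x, b, q} : Set _))]
    refine ⟨c -ᵥ b, ?_⟩
    rintro z (rfl | rfl | rfl)
    · exact ⟨t + s * (1 - t), by rw [← hxx, ← hq]; simp only [lineMap_apply,
        vsub_eq_sub, vadd_eq_add]; module⟩
    · exact ⟨0, by simp⟩
    · exact ⟨t, by rw [← hq]; simp only [lineMap_apply, vsub_eq_sub, vadd_eq_add]⟩
  have hbp : b ≠ p := by
    rintro rfl
    rw [lineMap_same_apply] at key
    exact hxb key.symm
  refine ⟨p, ?_, ?_⟩
  · rw [← key]; exact sbtw_lineMap_iff.2 ⟨hbp, hr0, hr1⟩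
  · rw [hp]; exact sbtw_lineMap_iff.2 ⟨hca, hu'⟩
end

section
/- Steiner–Lehmus theorem: let a, b, c be a triangle (a not on line bc), let x lie strictly between a and b and y strictly between c and b. If dist a y = dist c x, the segment ay bisects the angle at a (angle xay equals angle cay, equivalently angle bay equals angle cay), and the segment cx bisects the angle at c (angle ycx equals angle acx), then dist a b = dist c b; that is, the triangle is isosceles. -/
open EuclideanGeometry

private lemma sl_trig_case {α γ : ℝ} (hα : 0 < α) (hγ : 0 < γ) (hsum : 2 * α + 2 * γ < Real.pi)
    (hlt : α < γ)
    (hE : Real.sin (2 * γ) * Real.sin (γ + 2 * α) = Real.sin (2 * α) * Real.sin (α + 2 * γ)) :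
    False := by
  have hπ := Real.pi_pos
  have key : Real.sin (2 * α + 2 * γ) * (Real.sin γ - Real.sin α)
      = 2 * Real.sin α * Real.sin γ * (Real.cos γ - Real.cos α) := by
    simp only [Real.sin_add, Real.sin_two_mul, Real.cos_two_mul] at hE ⊢
    linear_combination hE
  have hS : 0 < Real.sin (2 * α + 2 * γ) :=
    Real.sin_pos_of_pos_of_lt_pi (by linarith) hsum
  have hsα : 0 < Real.sin α := Real.sin_pos_of_pos_of_lt_pi hα (by linarith)
  have hsγ : 0 < Real.sin γ := Real.sin_pos_of_pos_of_lt_pi hγ (by linarith)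
  have hsin : Real.sin α < Real.sin γ :=
    Real.sin_lt_sin_of_lt_of_le_pi_div_two (by linarith) (by linarith) hlt
  have hcos : Real.cos γ < Real.cos α :=
    Real.cos_lt_cos_of_nonneg_of_le_pi (by linarith) (by linarith) hlt
  nlinarith [mul_pos hS (sub_pos.2 hsin), mul_pos hsα hsγ]

private lemma sl_trig {α γ : ℝ} (hα : 0 < α) (hγ : 0 < γ) (hsum : 2 * α + 2 * γ < Real.pi)
    (hE : Real.sin (2 * γ) * Real.sin (γ + 2 * α) = Real.sin (2 * α) * Real.sin (α + 2 * γ)) :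
    α = γ := by
  rcases lt_trichotomy α γ with h | h | h
  · exact absurd hE (fun hE => sl_trig_case hα hγ hsum h hE)
  · exact h
  · exact absurd hE.symm (fun hE' => sl_trig_case hγ hα (by linarith) h hE')

/-- The angle is unchanged when a point is replaced by another one on the same ray:
if `q` lies strictly between `p` and `r`, then `∠ s r q = ∠ s r p`. -/
private lemma sl_angle_ray {p q r : EuclideanSpace ℝ (Fin 2)} (s : EuclideanSpace ℝ (Fin 2))
    (h : Sbtw ℝ p q r) : ∠ s r q = ∠ s r p := by
  obtain ⟨⟨t, ht, rfl⟩, hpr⟩ := sbtw_iff_mem_image_Ioo_and_ne.1 h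
  show InnerProductGeometry.angle _ _ = InnerProductGeometry.angle _ _
  have hv : AffineMap.lineMap p r t -ᵥ r = (1 - t) • (p -ᵥ r) := by
    rw [AffineMap.lineMap_apply, vadd_vsub_assoc, ← neg_vsub_eq_vsub_rev p r]
    module
  rw [hv, InnerProductGeometry.angle_smul_right_of_pos _ _ (by linarith [ht.2] : (0:ℝ) < 1 - t)]

/-- An unoriented law of sines. -/
private lemma sl_law_sin (p₁ p₂ p₃ : EuclideanSpace ℝ (Fin 2)) :
    Real.sin (∠ p₁ p₂ p₃) * (dist p₁ p₂ * dist p₃ p₂)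
      = Real.sin (∠ p₁ p₃ p₂) * (dist p₁ p₃ * dist p₂ p₃) := by
  rw [dist_eq_norm_vsub (EuclideanSpace ℝ (Fin 2)), dist_eq_norm_vsub (EuclideanSpace ℝ (Fin 2)),
    dist_eq_norm_vsub (EuclideanSpace ℝ (Fin 2)), dist_eq_norm_vsub (EuclideanSpace ℝ (Fin 2))]
  show Real.sin (InnerProductGeometry.angle _ _) * _
      = Real.sin (InnerProductGeometry.angle _ _) * _
  rw [InnerProductGeometry.sin_angle_mul_norm_mul_norm,
    InnerProductGeometry.sin_angle_mul_norm_mul_norm]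
  congr 1
  have h₁ : p₁ -ᵥ p₃ = (p₁ -ᵥ p₂) - (p₃ -ᵥ p₂) := (vsub_sub_vsub_cancel_right p₁ p₃ p₂).symm
  have h₂ : p₂ -ᵥ p₃ = -(p₃ -ᵥ p₂) := (neg_vsub_eq_vsub_rev p₃ p₂).symm
  rw [h₁, h₂]
  simp only [inner_sub_left, inner_sub_right, inner_neg_left, inner_neg_right,
    real_inner_comm (p₁ -ᵥ p₂) (p₃ -ᵥ p₂)]
  ring

theorem steiner_lehmus (a b c x y : EuclideanSpace ℝ (Fin 2))
    (ha : ¬ Collinear ℝ {a, b, c}) (hx : Sbtw ℝ a x b) (hy : Sbtw ℝ c y b)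
    (hcong : dist a y = dist c x)
    (hbis_a : ∠ x a y = ∠ c a y) (hbis_c : ∠ y c x = ∠ a c x) :
    dist a b = dist c b := by
  have hperm : ∀ {s : Set (EuclideanSpace ℝ (Fin 2))}, s = {a, b, c} → ¬ Collinear ℝ s :=
    fun h hc => ha (h ▸ hc)
  -- distinctness
  have hab : a ≠ b := fun h => ha (by rw [h]; simpa using collinear_pair ℝ b c)
  have hac : a ≠ c := fun h =>
    hperm (s := {b, a, c}) (by ext z; simp; tauto) (by rw [h]; simpa using collinear_pair ℝ b c)
  have hbc : b ≠ c := fun h =>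
    hperm rfl (by rw [h]; simpa using collinear_pair ℝ a c)
  have hya : y ≠ a := by
    rintro rfl
    exact hperm (s := {c, y, b}) (by ext z; simp; tauto) hy.wbtw.collinear
  have hxc : x ≠ c := by
    rintro rfl
    exact hperm (s := {a, x, b}) (by ext z; simp; tauto) hx.wbtw.collinear
  have hyb : y ≠ b := hy.ne_right
  have hyc : y ≠ c := hy.left_ne.symm
  have hxb : x ≠ b := hx.ne_right
  have hxa : x ≠ a := hx.left_ne.symm
  -- noncollinearity for angle positivity
  have hncol_cab : ¬ Collinear ℝ ({c, a, b} : Set _) := hperm (by ext z; simp; tauto)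
  have hncol_bca : ¬ Collinear ℝ ({b, c, a} : Set _) := hperm (by ext z; simp; tauto)
  have hApos : 0 < ∠ c a b := angle_pos_of_not_collinear hncol_cab
  have hBpos : 0 < ∠ a b c := angle_pos_of_not_collinear ha
  have hCpos : 0 < ∠ b c a := angle_pos_of_not_collinear hncol_bca
  -- ray angle rewrites
  have hr1 : ∠ y a x = ∠ y a b := sl_angle_ray y hx.symm
  have hr2 : ∠ x c y = ∠ x c b := sl_angle_ray x hy.symm
  have hr3 : ∠ a b y = ∠ a b c := sl_angle_ray a hy
  have hr4 : ∠ c b x = ∠ c b a := sl_angle_ray c hx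
  have hr5 : ∠ a c y = ∠ a c b := sl_angle_ray a hy.symm
  have hr6 : ∠ c a x = ∠ c a b := sl_angle_ray c hx.symm
  have hbisa' : ∠ b a y = ∠ c a y := by
    rw [angle_comm b a y, ← hr1, angle_comm y a x]; exact hbis_a
  have hbisc' : ∠ b c x = ∠ a c x := by
    rw [angle_comm b c x, ← hr2, angle_comm x c y]; exact hbis_c
  -- triangle angle sums
  have hs1 : ∠ b a y + ∠ a y b + ∠ y b a = Real.pi :=
    angle_add_angle_add_angle_eq_pi y hab
  have hs2 : ∠ c a y + ∠ a y c + ∠ y c a = Real.pi :=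
    angle_add_angle_add_angle_eq_pi y hac
  have hsp_y : ∠ a y c + ∠ a y b = Real.pi :=
    angle_add_angle_eq_pi_of_angle_eq_pi a hy.angle₁₂₃_eq_pi
  have hs3 : ∠ b c x + ∠ c x b + ∠ x b c = Real.pi :=
    angle_add_angle_add_angle_eq_pi x hbc.symm
  have hs4 : ∠ a c x + ∠ c x a + ∠ x a c = Real.pi :=
    angle_add_angle_add_angle_eq_pi x hac.symm
  have hsp_x : ∠ c x a + ∠ c x b = Real.pi :=
    angle_add_angle_eq_pi_of_angle_eq_pi c hx.angle₁₂₃_eq_pi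
  have hsT : ∠ c a b + ∠ a b c + ∠ b c a = Real.pi :=
    angle_add_angle_add_angle_eq_pi b hac
  rw [angle_comm y b a, hr3, hbisa'] at hs1
  rw [angle_comm y c a, hr5, angle_comm a c b] at hs2
  rw [angle_comm x b c, hr4, angle_comm c b a, hbisc'] at hs3
  rw [angle_comm x a c, hr6] at hs4
  -- half-angle relations
  have hA2 : ∠ c a b = 2 * ∠ c a y := by linarith
  have hC2 : ∠ b c a = 2 * ∠ a c x := by linarith
  have hyc_angle : ∠ a y c = Real.pi - (∠ c a y + ∠ b c a) := by linarith
  have hxa_angle : ∠ c x a = Real.pi - (∠ a c x + ∠ c a b) := by linarith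
  -- law of sines in triangles a c y and c a x
  have L1 := sl_law_sin a c y
  rw [hr5, angle_comm a c b, hyc_angle, Real.sin_pi_sub, dist_comm y c] at L1
  have Eq1 : Real.sin (∠ b c a) * dist a c = Real.sin (∠ c a y + ∠ b c a) * dist a y :=
    mul_right_cancel₀ (dist_ne_zero.2 hyc.symm) (by linear_combination L1)
  have L2 := sl_law_sin c a x
  rw [hr6, hxa_angle, Real.sin_pi_sub, dist_comm x a] at L2
  have Eq2 : Real.sin (∠ c a b) * dist c a = Real.sin (∠ a c x + ∠ c a b) * dist c x :=
    mul_right_cancel₀ (dist_ne_zero.2 hxa.symm) (by linear_combination L2)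
  -- the key trigonometric equation
  have hE0 : Real.sin (∠ b c a) * Real.sin (∠ a c x + ∠ c a b)
      = Real.sin (∠ c a b) * Real.sin (∠ c a y + ∠ b c a) := by
    apply mul_right_cancel₀ (dist_ne_zero.2 hac)
    linear_combination Real.sin (∠ a c x + ∠ c a b) * Eq1
      + Real.sin (∠ c a y + ∠ b c a) * Real.sin (∠ a c x + ∠ c a b) * hcong
      - Real.sin (∠ c a y + ∠ b c a) * Eq2
      + Real.sin (∠ c a y + ∠ b c a) * Real.sin (∠ c a b) * (dist_comm c a)
  rw [hA2, hC2] at hE0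
  -- the trigonometric heart of the proof
  have hαγ : ∠ c a y = ∠ a c x :=
    sl_trig (by linarith) (by linarith) (by linarith) hE0
  have hAC : ∠ c a b = ∠ b c a := by rw [hA2, hC2, hαγ]
  -- conclude with the law of sines in triangle a b c
  have L3 := sl_law_sin b a c
  rw [angle_comm b a c, hAC, dist_comm a c] at L3
  have hsC : Real.sin (∠ b c a) ≠ 0 :=
    (Real.sin_pos_of_pos_of_lt_pi hCpos (by linarith)).ne'
  have hfin : dist b a = dist b c :=
    mul_right_cancel₀ (dist_ne_zero.2 hac.symm) (mul_left_cancel₀ hsC L3)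
  rw [dist_comm a b, dist_comm c b]
  exact hfin
end

section
/- Euclid I.27 (alternate angles imply parallels), constructive form: let a,b,c,d,x,y be points with x collinear with a,b; y collinear with c,d; a ≠ b; c ≠ d; a strictly left of the directed segment from y to x; c strictly left of the directed segment from x to y; and angle a x y equal to angle c y x. Then line ab is parallel to line cd. -/
open EuclideanGeometry
open scoped RealInnerProductSpace

def Left (p a b : EuclideanSpace ℝ (Fin 2)) : Prop :=
  (a 0 - p 0) * (b 1 - p 1) - (b 0 - p 0) * (a 1 - p 1) > 0

lemma euclid27_key (u0 u1 v0 v1 w0 w1 nu nv nw : ℝ)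
    (hnu2 : nu^2 = u0^2 + u1^2) (hnv2 : nv^2 = v0^2 + v1^2) (hnw2 : nw^2 = w0^2 + w1^2)
    (hnu0 : nu ≥ 0) (hnv0 : nv ≥ 0) (hnw0 : nw ≥ 0)
    (hB : u0 * v1 - u1 * v0 > 0) (hD : w0 * v1 - w1 * v0 < 0)
    (hcos : (u0*v0 + u1*v1) / (nu * nv) = -(w0*v0 + w1*v1) / (nw * nv)) :
    w0 * u1 - w1 * u0 = 0 := by
  have huv_pos : u0^2 + u1^2 > 0 := by nlinarith [sq_nonneg (u0*v0 + u1*v1)]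
  have hvv_pos : v0^2 + v1^2 > 0 := by nlinarith [sq_nonneg (u0*v0 + u1*v1)]
  have hww_pos : w0^2 + w1^2 > 0 := by nlinarith [sq_nonneg (w0*v0 + w1*v1)]
  have hnu : nu > 0 := by nlinarith
  have hnv : nv > 0 := by nlinarith
  have hnw : nw > 0 := by nlinarith
  have hAC : (u0*v0 + u1*v1) * nw = -(w0*v0 + w1*v1) * nu := by
    rw [div_eq_div_iff (by positivity) (by positivity)] at hcos
    have h2 : ((u0*v0 + u1*v1) * nw) * nv = (-(w0*v0 + w1*v1) * nu) * nv := by linarith [hcos]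
    exact mul_right_cancel₀ (ne_of_gt hnv) h2
  have hBD : (u0*v1 - u1*v0) * nw = -(w0*v1 - w1*v0) * nu := by
    have h1 : ((u0*v0+u1*v1) * nw)^2 = ((w0*v0+w1*v1) * nu)^2 := by
      linear_combination ((u0*v0+u1*v1)*nw - (w0*v0+w1*v1)*nu) * hAC
    have hsq : ((u0*v1 - u1*v0) * nw)^2 = ((w0*v1 - w1*v0) * nu)^2 := by
      linear_combination (v0^2+v1^2) * nu^2 * hnw2 - (v0^2+v1^2) * nw^2 * hnu2 - h1
    have h3 : ((u0*v1 - u1*v0) * nw - -(w0*v1 - w1*v0) * nu) * ((u0*v1 - u1*v0) * nw + -(w0*v1 - w1*v0) * nu) = 0 := by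
      linear_combination hsq
    rcases mul_eq_zero.1 h3 with h | h
    · linarith
    · linarith [mul_pos hB hnw, mul_pos (neg_pos.2 hD) hnu]
  have hADBC : (u0*v0 + u1*v1) * (w0*v1 - w1*v0) = (u0*v1 - u1*v0) * (w0*v0 + w1*v1) := by
    have h0 : nw * ((u0*v0 + u1*v1) * (w0*v1 - w1*v0) - (u0*v1 - u1*v0) * (w0*v0 + w1*v1)) = 0 := by
      linear_combination (w0*v1 - w1*v0) * hAC - (w0*v0 + w1*v1) * hBD
    rcases mul_eq_zero.1 h0 with h | h
    · exact absurd h (ne_of_gt hnw)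
    · linarith
  have h2 : (w0 * u1 - w1 * u0) * (v0^2 + v1^2) = 0 := by linear_combination hADBC
  rcases mul_eq_zero.1 h2 with h | h
  · exact h
  · exact absurd h (ne_of_gt hvv_pos)

lemma euclid27_pos (p q r s : ℝ) (h : p * s - q * r ≠ 0) : p^2 + q^2 > 0 := by
  rcases lt_or_eq_of_le (by positivity : (0:ℝ) ≤ p^2 + q^2) with h2 | h2
  · exact h2
  · exfalso
    have hp : p = 0 := by nlinarith [sq_nonneg p, sq_nonneg q]
    have hq : q = 0 := by nlinarith [sq_nonneg p, sq_nonneg q]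
    apply h; rw [hp, hq]; ring

set_option maxHeartbeats 1000000 in
theorem euclid_prop27 (a b c d x y : EuclideanSpace ℝ (Fin 2))
    (hxab : Collinear ℝ {a, b, x}) (hycd : Collinear ℝ {c, d, y})
    (hab : a ≠ b) (hcd : c ≠ d)
    (hLa : Left a y x) (hLc : Left c x y)
    (hang : ∠ a x y = ∠ c y x) :
    ∃ k : ℝ, d - c = k • (b - a) := by
  have hB : (a 0 - x 0) * (y 1 - x 1) - (a 1 - x 1) * (y 0 - x 0) > 0 := by
    have h := hLa; unfold Left at h; nlinarith [h]
  have hD : (c 0 - y 0) * (y 1 - x 1) - (c 1 - y 1) * (y 0 - x 0) < 0 := by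
    have h := hLc; unfold Left at h; nlinarith [h]
  have hnu2 : ‖a - x‖^2 = (a 0 - x 0)^2 + (a 1 - x 1)^2 := by
    rw [EuclideanSpace.norm_sq_eq]; simp [Fin.sum_univ_two]
  have hnv2 : ‖y - x‖^2 = (y 0 - x 0)^2 + (y 1 - x 1)^2 := by
    rw [EuclideanSpace.norm_sq_eq]; simp [Fin.sum_univ_two]
  have hnw2 : ‖c - y‖^2 = (c 0 - y 0)^2 + (c 1 - y 1)^2 := by
    rw [EuclideanSpace.norm_sq_eq]; simp [Fin.sum_univ_two]
  have hcos := congrArg Real.cos hang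
  unfold EuclideanGeometry.angle at hcos
  rw [vsub_eq_sub, vsub_eq_sub, vsub_eq_sub, vsub_eq_sub,
    InnerProductGeometry.cos_angle, InnerProductGeometry.cos_angle] at hcos
  have hi1 : ⟪a - x, y - x⟫ = (a 0 - x 0)*(y 0 - x 0) + (a 1 - x 1)*(y 1 - x 1) := by
    simp [PiLp.inner_apply, Fin.sum_univ_two]; ring
  have hi2 : ⟪c - y, x - y⟫ = -((c 0 - y 0)*(y 0 - x 0) + (c 1 - y 1)*(y 1 - x 1)) := by
    simp [PiLp.inner_apply, Fin.sum_univ_two]; ring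
  have hnz : ‖x - y‖ = ‖y - x‖ := norm_sub_rev x y
  rw [hi1, hi2, hnz] at hcos
  have hcross := euclid27_key (a 0 - x 0) (a 1 - x 1) (y 0 - x 0) (y 1 - x 1)
    (c 0 - y 0) (c 1 - y 1) ‖a - x‖ ‖y - x‖ ‖c - y‖ hnu2 hnv2 hnw2
    (norm_nonneg _) (norm_nonneg _) (norm_nonneg _) hB hD hcos
  -- nonvanishing of u and w
  have huv_pos : (a 0 - x 0)^2 + (a 1 - x 1)^2 > 0 :=
    euclid27_pos _ _ _ _ (ne_of_gt hB)
  have hww_pos : (c 0 - y 0)^2 + (c 1 - y 1)^2 > 0 :=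
    euclid27_pos _ _ _ _ (ne_of_lt hD)
  -- collinearity data
  obtain ⟨va, hva⟩ := (collinear_iff_of_mem (show x ∈ ({a,b,x} : Set _) by simp)).1 hxab
  obtain ⟨ra, ha⟩ := hva a (by simp)
  obtain ⟨rb, hb⟩ := hva b (by simp)
  obtain ⟨vc, hvc⟩ := (collinear_iff_of_mem (show y ∈ ({c,d,y} : Set _) by simp)).1 hycd
  obtain ⟨sc, hc⟩ := hvc c (by simp)
  obtain ⟨sd, hd⟩ := hvc d (by simp)
  have hrb : rb - ra ≠ 0 := by
    intro h
    apply hab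
    have h2 : rb = ra := by linarith
    rw [ha, hb, h2]
  have ha0 : a 0 - x 0 = ra * va 0 := by rw [ha]; simp
  have ha1 : a 1 - x 1 = ra * va 1 := by rw [ha]; simp
  have hb0 : b 0 - a 0 = (rb - ra) * va 0 := by rw [ha, hb]; simp; ring
  have hb1 : b 1 - a 1 = (rb - ra) * va 1 := by rw [ha, hb]; simp; ring
  have hc0 : c 0 - y 0 = sc * vc 0 := by rw [hc]; simp
  have hc1 : c 1 - y 1 = sc * vc 1 := by rw [hc]; simp
  have hd0 : d 0 - c 0 = (sd - sc) * vc 0 := by rw [hc, hd]; simp; ring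
  have hd1 : d 1 - c 1 = (sd - sc) * vc 1 := by rw [hc, hd]; simp; ring
  have hra : ra ≠ 0 := by
    intro h; rw [h, zero_mul] at ha0 ha1; nlinarith
  have hsc : sc ≠ 0 := by
    intro h; rw [h, zero_mul] at hc0 hc1; nlinarith
  have hva2 : va 0 ^2 + va 1 ^2 > 0 := by
    have h0 : (a 0 - x 0)^2 + (a 1 - x 1)^2 = ra^2 * (va 0^2 + va 1^2) := by
      linear_combination ((a 0 - x 0) + ra * va 0) * ha0 + ((a 1 - x 1) + ra * va 1) * ha1
    nlinarith [h0, huv_pos, sq_nonneg ra]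
  have hcva : vc 0 * va 1 - vc 1 * va 0 = 0 := by
    rw [ha0, ha1, hc0, hc1] at hcross
    have h2 : sc * ra * (vc 0 * va 1 - vc 1 * va 0) = 0 := by linear_combination hcross
    rcases mul_eq_zero.1 h2 with h | h
    · exact absurd h (mul_ne_zero hsc hra)
    · exact h
  refine ⟨(sd - sc) * ((vc 0 * va 0 + vc 1 * va 1)/(va 0^2 + va 1^2)) / (rb - ra), ?_⟩
  ext i
  fin_cases i
  · show d 0 - c 0 = _ * (b 0 - a 0)
    rw [hd0, hb0]
    field_simp
    linear_combination (sd - sc) * va 1 * hcva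
  · show d 1 - c 1 = _ * (b 1 - a 1)
    rw [hd1, hb1]
    field_simp
    linear_combination (-(sd - sc) * va 0) * hcva
end
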